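/- Let (V,q) and (W,p) be non-degenerate quadratic spaces over k, each of dimension ≤ ℵ₀ as k-vector spaces. Then there exist k-linear maps φ : W → V and ψ : V → W with q(φ(w)) = p(w) for all w ∈ W and p(ψ(v)) = q(v) for all v ∈ V; that is, any two non-degenerate quadratic spaces of countable dimension over k are isogenous. -/

import Mathlib

/-!
A form vanishing on the common kernel of finitely many linear forms has finite strength, so a
non-degenerate form `q` has vectors with `q x = 1` orthogonal to any finite set, hence an infinite
orthonormal sequence `v`. With `c ^ 2 = -1`, the vectors `(v (2n) ± c • v (2n+1)) / 2` form an
infinite hyperbolic sequence `u, w`. A countable-dimensional space is a retract of `ℕ →₀ k`, and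
a form `p` on a space with basis `e : ℕ → W` is pulled back from `q` by
`e n ↦ w n + ∑_{m ≤ n} a m n • u m`, where `a` is the upper-triangular half of the Gram matrix of
`p` (with `p (e n)` on the diagonal): the polar forms then agree on the basis, which determines a
quadratic form as `2 ≠ 0`.
-/

open scoped BigOperators

def FinStrength (k V : Type*) [Field k] [AddCommGroup V] [Module k V] :
    Submodule k (QuadraticForm k V) where
  carrier := {q | ∃ (n : ℕ) (l m : Fin n → V →ₗ[k] k), ∀ x, q x = ∑ i, l i x * m i x}
  zero_mem' := ⟨0, ![], ![], fun x => by simp⟩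
  add_mem' := by
    rintro q q' ⟨n, l, m, h⟩ ⟨n', l', m', h'⟩
    refine ⟨n + n', Fin.append l l', Fin.append m m', fun x => ?_⟩
    simp [Fin.sum_univ_add, Fin.append_left, Fin.append_right, h, h']
  smul_mem' := by
    rintro c q ⟨n, l, m, h⟩
    refine ⟨n, fun i => c • l i, m, fun x => ?_⟩
    simp [h, Finset.mul_sum, mul_assoc, smul_eq_mul]

open QuadraticMap

section FiniteStrength

variable {k V : Type*} [Field k] [AddCommGroup V] [Module k V]

theorem mem_finStrength_of_eq_mul (Q : QuadraticForm k V) (l m : V →ₗ[k] k)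
    (h : ∀ x, Q x = l x * m x) : Q ∈ FinStrength k V :=
  ⟨1, ![l], ![m], by simpa using h⟩

theorem sub_comp_sub_smulRight_mem_finStrength (q : QuadraticForm k V) (l : V →ₗ[k] k)
    (w : V) : q - q.comp (LinearMap.id - l.smulRight w) ∈ FinStrength k V := by
  set T := LinearMap.id - l.smulRight w
  refine mem_finStrength_of_eq_mul _ l (q.polarBilin w ∘ₗ T + q w • l) fun x => ?_
  have hx : T x + l x • w = x := by simp [T]
  have hpolar : q (T x + l x • w) = q (T x) + q (l x • w) + polar q (T x) (l x • w) := by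
    rw [polar]; ring
  rw [hx] at hpolar
  simp only [sub_apply, comp_apply, hpolar, QuadraticMap.map_smul, polar_smul_left,
    polar_comm _ (T x), LinearMap.add_apply, LinearMap.comp_apply, polarBilin_apply_apply,
    LinearMap.smul_apply, smul_eq_mul]
  ring

theorem exists_forall_apply_sub_smul_eq_zero (l : V →ₗ[k] k) :
    ∃ w, ∀ x, l (x - l x • w) = 0 := by
  by_cases hl : l = 0
  · exact ⟨0, by simp [hl]⟩
  · obtain ⟨w, hw⟩ := LinearMap.surjective_of_ne_zero hl 1
    exact ⟨w, by simp [hw]⟩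

theorem mem_finStrength_of_forall_eq_zero {n : ℕ} (l : Fin n → V →ₗ[k] k)
    (q : QuadraticForm k V) (h : ∀ x, (∀ i, l i x = 0) → q x = 0) : q ∈ FinStrength k V := by
  induction n generalizing q with
  | zero => simp [show q = 0 from QuadraticMap.ext fun x => h x finZeroElim, zero_mem]
  | succ n ih =>
    -- `x ↦ x - l 0 x • w` maps into the kernel of `l 0` and changes `q` by a finite-strength form.
    obtain ⟨w, hw⟩ := exists_forall_apply_sub_smul_eq_zero (l 0)
    have hT : q.comp (LinearMap.id - (l 0).smulRight w) ∈ FinStrength k V :=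
      ih (fun i => l i.succ ∘ₗ (LinearMap.id - (l 0).smulRight w)) _ fun x hx =>
        h _ (Fin.cases (hw x) hx)
    simpa using add_mem hT (sub_comp_sub_smulRight_mem_finStrength q (l 0) w)

end FiniteStrength

section Orthonormal

variable {k V : Type*} [Field k] [AddCommGroup V] [Module k V] {q : QuadraticForm k V}

theorem exists_ne_zero_polar_eq_zero (hq : q ∉ FinStrength k V) (S : Finset V) :
    ∃ x, q x ≠ 0 ∧ ∀ y ∈ S, polar q y x = 0 := by
  by_contra! h
  refine hq (mem_finStrength_of_forall_eq_zero (fun i => q.polarBilin (S.equivFin.symm i)) q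
    fun x hx => ?_)
  by_contra hqx
  obtain ⟨y, hy, hyx⟩ := h x hqx
  exact hyx (by simpa using hx (S.equivFin ⟨y, hy⟩))

theorem exists_eq_one_polar_eq_zero [IsAlgClosed k] (hq : q ∉ FinStrength k V) (S : Finset V) :
    ∃ x, q x = 1 ∧ ∀ y ∈ S, polar q y x = 0 := by
  obtain ⟨x, hx, hxS⟩ := exists_ne_zero_polar_eq_zero hq S
  obtain ⟨c, hc⟩ := IsAlgClosed.exists_pow_nat_eq (q x)⁻¹ two_pos
  refine ⟨c • x, ?_, fun y hy => by rw [polar_smul_right, hxS y hy, smul_zero]⟩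
  rw [QuadraticMap.map_smul, smul_eq_mul, ← _root_.sq, hc, inv_mul_cancel₀ hx]

theorem exists_orthonormal_seq [IsAlgClosed k] (hq : q ∉ FinStrength k V) :
    ∃ v : ℕ → V, (∀ n, q (v n) = 1) ∧ ∀ m n, m < n → polar q (v m) (v n) = 0 :=
  exists_seq_of_forall_finset_exists _ _ fun S _ => exists_eq_one_polar_eq_zero hq S

end Orthonormal

section Hyperbolic

variable {k V : Type*} [Field k] [AddCommGroup V] [Module k V] {q : QuadraticForm k V}

structure IsHyperbolicSeq (q : QuadraticForm k V) (u w : ℕ → V) : Prop where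
  polar_left : ∀ m n, polar q (u m) (u n) = 0
  polar_right : ∀ m n, polar q (w m) (w n) = 0
  polar_left_right : ∀ m n, polar q (u m) (w n) = if m = n then 1 else 0

theorem polar_eq_ite_of_orthonormal {v : ℕ → V} (hv : ∀ n, q (v n) = 1)
    (hv' : ∀ m n, m < n → polar q (v m) (v n) = 0) (m n : ℕ) :
    polar q (v m) (v n) = if m = n then 2 else 0 := by
  rcases lt_trichotomy m n with h | rfl | h
  · simp [hv' m n h, h.ne]
  · simp [polar_self, hv]
  · rw [polar_comm, hv' n m h, if_neg h.ne']

theorem exists_isHyperbolicSeq [IsAlgClosed k] (hk2 : (2 : k) ≠ 0)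
    (hq : q ∉ FinStrength k V) : ∃ u w, IsHyperbolicSeq q u w := by
  obtain ⟨v, hv, hv'⟩ := exists_orthonormal_seq hq
  obtain ⟨c, hc⟩ := IsAlgClosed.exists_pow_nat_eq (-1 : k) two_pos
  have hpolar := polar_eq_ite_of_orthonormal hv hv'
  have hodd : ∀ a b : ℕ, 2 * a ≠ 2 * b + 1 ∧ 2 * a + 1 ≠ 2 * b := by omega
  refine ⟨fun n => (2 : k)⁻¹ • (v (2 * n) + c • v (2 * n + 1)),
    fun n => (2 : k)⁻¹ • (v (2 * n) - c • v (2 * n + 1)),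
    ⟨fun m n => ?_, fun m n => ?_, fun m n => ?_⟩⟩ <;>
  · simp only [polar_smul_left, polar_smul_right, polar_add_left, polar_add_right, polar_sub_left,
      polar_sub_right, hpolar, smul_eq_mul]
    rcases eq_or_ne m n with rfl | h
    · simp only [if_true, hodd, if_false]
      field_simp
      ring_nf
      rw [hc]
      ring
    · simp [h, hodd]

end Hyperbolic

namespace IsHyperbolicSeq

variable {k V : Type*} [Field k] [AddCommGroup V] [Module k V] {q : QuadraticForm k V}
  {u w : ℕ → V}

open Finset in
theorem polar_add_sum (huw : IsHyperbolicSeq q u w) (A B : ℕ → k) (i j : ℕ) :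
    polar q (w i + ∑ m ∈ range (i + 1), A m • u m) (w j + ∑ m ∈ range (j + 1), B m • u m) =
      (if i ≤ j then B i else 0) + if j ≤ i then A j else 0 := by
  rw [← polarBilin_apply_apply]
  simp only [map_add, map_sum, map_smul, LinearMap.add_apply, LinearMap.sum_apply,
    LinearMap.smul_apply, smul_eq_mul, polarBilin_apply_apply, huw.polar_left, huw.polar_right,
    huw.polar_left_right, polar_comm _ (w _)]
  simp [add_comm]

open Finset in
theorem exists_comp_eq (hk2 : (2 : k) ≠ 0) (huw : IsHyperbolicSeq q u w) {W : Type*}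
    [AddCommGroup W] [Module k W] (b : Module.Basis ℕ k W) (p : QuadraticForm k W) :
    ∃ φ : W →ₗ[k] V, q.comp φ = p := by
  let a (m n : ℕ) : k := if m < n then polar p (b m) (b n) else p (b n)
  refine ⟨b.constr k fun n => w n + ∑ m ∈ range (n + 1), a m n • u m,
    polarBilin_injective (isUnit_iff_ne_zero.mpr hk2) (LinearMap.ext_basis b b fun i j => ?_)⟩
  rw [polarBilin_comp, LinearMap.compl₁₂_apply, b.constr_basis, b.constr_basis,
    polarBilin_apply_apply, polarBilin_apply_apply, huw.polar_add_sum]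
  rcases lt_trichotomy i j with h | rfl | h
  · simp [a, h, h.le, h.not_ge]
  · simp [a, polar_self, two_mul]
  · simp [a, h, h.le, h.not_ge, polar_comm]

end IsHyperbolicSeq

theorem exists_leftInverse_finsupp_nat {k W : Type*} [Field k] [AddCommGroup W] [Module k W]
    (hW : Module.rank k W ≤ Cardinal.aleph0) :
    ∃ (ι : W →ₗ[k] ℕ →₀ k) (π : (ℕ →₀ k) →ₗ[k] W), ∀ x, π (ι x) = x := by
  let b := Module.Free.chooseBasis k W
  have : Countable (Module.Free.ChooseBasisIndex k W) := by
    rwa [← Cardinal.mk_le_aleph0_iff, ← Module.Free.rank_eq_card_chooseBasisIndex]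
  obtain ⟨g, hg⟩ := Countable.exists_injective_nat (Module.Free.ChooseBasisIndex k W)
  exact ⟨Finsupp.lmapDomain k k g ∘ₗ b.repr, b.repr.symm ∘ₗ Finsupp.lcomapDomain g hg,
    fun x => by simp [Finsupp.lcomapDomain, Finsupp.comapDomain_mapDomain _ hg]⟩

theorem exists_comp_eq_of_notMem_finStrength {k V W : Type*} [Field k] [IsAlgClosed k]
    (hk2 : (2 : k) ≠ 0) [AddCommGroup V] [Module k V] [AddCommGroup W] [Module k W]
    {q : QuadraticForm k V} (hq : q ∉ FinStrength k V) (p : QuadraticForm k W)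
    (hW : Module.rank k W ≤ Cardinal.aleph0) : ∃ φ : W →ₗ[k] V, ∀ x, q (φ x) = p x := by
  obtain ⟨u, w, huw⟩ := exists_isHyperbolicSeq hk2 hq
  obtain ⟨ι, π, hπ⟩ := exists_leftInverse_finsupp_nat hW
  obtain ⟨φ, hφ⟩ := huw.exists_comp_eq hk2 Finsupp.basisSingleOne (p.comp π)
  exact ⟨φ ∘ₗ ι, fun x => by simpa [hπ] using congr($hφ (ι x))⟩

/-- Any two non-degenerate quadratic spaces of countable dimension over
an algebraically closed field of characteristic `≠ 2` are isogenous. -/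
theorem quadratic_isogenous
    {k V W : Type*} [Field k] [IsAlgClosed k] (hk2 : (2 : k) ≠ 0)
    [AddCommGroup V] [Module k V] [AddCommGroup W] [Module k W]
    (q : QuadraticForm k V) (hq : q ∉ FinStrength k V)
    (hVdim : Module.rank k V ≤ Cardinal.aleph0)
    (p : QuadraticForm k W) (hp : p ∉ FinStrength k W)
    (hWdim : Module.rank k W ≤ Cardinal.aleph0) :
    (∃ φ : W →ₗ[k] V, ∀ w, q (φ w) = p w) ∧ ∃ ψ : V →ₗ[k] W, ∀ v, p (ψ v) = q v :=
  ⟨exists_comp_eq_of_notMem_finStrength hk2 hq p hWdim,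
    exists_comp_eq_of_notMem_finStrength hk2 hp q hVdim⟩
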